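/- (Jump move, k = d = 2.) Fix ℓ ≥ 2, y ∈ ℤ², and a site ⋆ ∈ y + {−1}×[ℓ]. Let M be the set of configurations η such that the column y + {0}×[ℓ] is entirely empty, the column y + {−1}×[ℓ] contains at least one empty site other than ⋆, and the column y + {1}×[ℓ] contains at least two empty sites. There exists a T-step move M with domain determined by M such that for every η ∈ M with η(⋆) = 1 the final configuration is M_T η = η^{⋆, ⋆+(2,0)} (the values at ⋆ and ⋆+(2,0) are exchanged) and the tracked particle satisfies z_T(η,⋆) = ⋆ + (2,0). Moreover, Loss(M) ≤ C log₂ ℓ and T ≤ C ℓ for a universal constant C. -/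

import Mathlib

open MeasureTheory ENNReal

noncomputable section

namespace KA

open scoped Classical

/-- Sites of the lattice `ℤ^d`. -/
abbrev Site (d : ℕ) := Fin d → ℤ

/-- A configuration: `true` = occupied, `false` = empty. -/
abbrev Config (d : ℕ) := Site d → Bool

variable {d : ℕ}

def origin : Site d := fun _ => 0

def eVec (d : ℕ) (i : Fin d) : Site d := fun j => if j = i then 1 else 0

/-- Nearest neighbours in `ℤ^d`. -/
def adj (x y : Site d) : Prop := (∑ i, |x i - y i|) = 1

/-- The set of (at most `2d`) nearest neighbours of a site. -/
def neighbors (x : Site d) : Finset (Site d) :=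
  Finset.image (fun p : Fin d × Bool =>
    Function.update x p.1 (x p.1 + if p.2 then 1 else -1)) Finset.univ

/-- The Kob-Andersen kinetic constraint `c_{xy}` for parameter `k`:
`x` has at least `k-1` empty neighbours other than `y`, and vice versa. -/
def constraint (k : ℕ) (η : Config d) (x y : Site d) : Prop :=
  k - 1 ≤ ((neighbors x).filter fun z => z ≠ y ∧ η z = false).card ∧
  k - 1 ≤ ((neighbors y).filter fun z => z ≠ x ∧ η z = false).card

/-- `c_{xy}(η)` as a `{0,1}`-valued quantity. -/
def cval (k : ℕ) (η : Config d) (x y : Site d) : ℝ≥0∞ :=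
  if constraint k η x y then 1 else 0

/-- `η^{xy}` : the configuration with the values at `x` and `y` exchanged. -/
def swap (η : Config d) (x y : Site d) : Config d :=
  fun z => if z = x then η y else if z = y then η x else η z

/-- `(τ_y η)(z) = η (z - y)`. -/
def shift (y : Site d) (η : Config d) : Config d := fun z => η (z - y)

/-- A local function depends on finitely many coordinates. -/
def IsLocal (f : Config d → ℝ) : Prop :=
  ∃ S : Finset (Site d), ∀ η η' : Config d, (∀ x ∈ S, η x = η' x) → f η = f η'

def dotZ (u : Fin d → ℝ) (y : Site d) : ℝ := ∑ i, u i * (y i : ℝ)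

/-- The environment part `Σ_{x ≠ 0} Σ_{y ∼ x} c_{xy} (f(η^{xy}) - f(η))²`. -/
def envTerm (k : ℕ) (f : Config d → ℝ) (η : Config d) : ℝ≥0∞ :=
  ∑' p : Site d × Site d,
    if p.1 ≠ origin ∧ adj p.1 p.2 then
      cval k η p.1 p.2 * ENNReal.ofReal ((f (swap η p.1 p.2) - f η) ^ 2)
    else 0

/-- The tagged-particle part `Σ_{y ∼ 0} c_{0y} (u·y + f(τ_y η^{0y}) - f(η))²`. -/
def tagTerm (k : ℕ) (u : Fin d → ℝ) (f : Config d → ℝ) (η : Config d) : ℝ≥0∞ :=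
  ∑' y : Site d,
    if adj origin y then
      cval k η origin y *
        ENNReal.ofReal ((dotZ u y + f (shift y (swap η origin y)) - f η) ^ 2)
    else 0

/-- The variational (Dirichlet) functional `E_u(f)` integrated against `μ₀`. -/
def energy (k : ℕ) (u : Fin d → ℝ) (μ0 : Measure (Config d)) (f : Config d → ℝ) : ℝ≥0∞ :=
  ∫⁻ η, envTerm k f η + tagTerm k u f η ∂μ0

/-- `μ` is the Bernoulli product measure where each site is independently
occupied with probability `1 - q`. -/
def IsBernoulliProduct (q : ℝ) (μ : Measure (Config d)) : Prop :=
  IsProbabilityMeasure μ ∧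
  ∀ (S : Finset (Site d)) (ζ : Site d → Bool),
    μ {η | ∀ x ∈ S, η x = ζ x} = ∏ x ∈ S, ENNReal.ofReal (if ζ x then 1 - q else q)

/-- `μ₀ = μ(· | η(0) = 1)`. -/
def condOcc (μ : Measure (Config d)) : Measure (Config d) :=
  ProbabilityTheory.cond μ {η | η origin = true}

/-- The first standard basis vector of `ℝ^d`. -/
def e1R (d : ℕ) : Fin d → ℝ := fun i => if (i : ℕ) = 0 then 1 else 0

def basisR (d : ℕ) (i : Fin d) : Fin d → ℝ := fun j => if j = i then 1 else 0

/-- The quadratic form `u ↦ inf over local f of E_u(f)`. -/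
def Qform (k : ℕ) (μ : Measure (Config d)) (u : Fin d → ℝ) : ℝ≥0∞ :=
  ⨅ f : {f : Config d → ℝ // IsLocal f}, energy k u (condOcc μ) f.1

/-- The self-diffusion coefficient `D(q) = inf_f E_{e₁}(f)`. -/
def diffCoeff (k : ℕ) (μ : Measure (Config d)) : ℝ≥0∞ := Qform k μ (e1R d)

/-- `expIter n` is the `n`-fold iterated exponential. -/
def expIter : ℕ → ℝ → ℝ
  | 0, x => x
  | n + 1, x => Real.exp (expIter n x)

/-! ### Frameability, goodness, block-connectedness -/

/-- Fill every site outside `V` with a particle. -/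
def fillOutside (V : Set (Site d)) (η : Config d) : Config d :=
  fun z => if z ∈ V then η z else true

/-- A single legal KA-`k`f transition inside `V`. -/
def KAStep (k : ℕ) (V : Set (Site d)) (η η' : Config d) : Prop :=
  ∃ x y, adj x y ∧ x ∈ V ∧ y ∈ V ∧ η x ≠ η y ∧ constraint k η x y ∧ η' = swap η x y

/-- A generalized box with minimal corner `a`, spanning the directions in `E`,
with side length `m` (coordinates outside `E` are frozen at `a`). -/
def genBox (a : Site d) (E : Finset (Fin d)) (m : ℕ) : Set (Site d) :=
  {x | ∀ i, (i ∈ E → a i ≤ x i ∧ x i < a i + m) ∧ (i ∉ E → x i = a i)}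

/-- The `k'`-th frame of the generalized box: the union of all of its
`(k'-1)`-dimensional slices passing through the minimal corner. -/
def genFrame (k' : ℕ) (a : Site d) (E : Finset (Fin d)) (m : ℕ) : Set (Site d) :=
  {x | x ∈ genBox a E m ∧ (E.filter fun i => x i ≠ a i).card ≤ k' - 1}

/-- The generalized box is frameable for `η` : `η` (with the outside filled by
particles) is connected by legal KA-`k'`f transitions inside the box to a
configuration whose `k'`-th frame is empty. -/
def Frameable (k' : ℕ) (a : Site d) (E : Finset (Fin d)) (m : ℕ) (η : Config d) : Prop :=
  ∃ η', Relation.ReflTransGen (KAStep k' (genBox a E m)) (fillOutside (genBox a E m) η) η' ∧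
    ∀ x ∈ genFrame k' a E m, η' x = false

def one (d : ℕ) : Site d := fun _ => 1

/-- minimal corner of the box `b + [m]^d`. -/
def corner (b : Site d) : Site d := fun i => b i + 1

/-- All codimension-one slices of the generalized box are `(k'-1)`-frameable,
for every configuration differing from `η` in at most one site. -/
def SlicesOK (k' : ℕ) (a : Site d) (E : Finset (Fin d)) (m : ℕ) (η : Config d) : Prop :=
  ∀ η' : Config d, {x | η' x ≠ η x}.Subsingleton →
    ∀ i ∈ E, ∀ t : ℕ, t < m →
      Frameable (k' - 1) (Function.update a i (a i + t)) (E.erase i) m η'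

/-- A good box: all codimension-one slices frameable (robustly to one spin flip),
with one extra empty site in addition to the ones required. -/
def GoodBox (k' : ℕ) (a : Site d) (E : Finset (Fin d)) (m : ℕ) (η : Config d) : Prop :=
  SlicesOK k' a E m η ∧
  ∃ x₀ ∈ genBox a E m, η x₀ = false ∧ SlicesOK k' a E m (Function.update η x₀ true)

/-- The length scale `ℓ = ℓ(q)`. -/
def lscale (d k : ℕ) (c q : ℝ) : ℕ :=
  if k = 2 then ⌈c * Real.log (1 / q) * q ^ (-(1 : ℝ) / ((d : ℝ) - 1))⌉₊
  else ⌈c * expIter (k - 2) (q ^ (-(1 : ℝ) / ((d : ℝ) - (k : ℝ) + 1)))⌉₊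

/-- The length scale `L = q^{-cℓ}`. -/
def Lscale (q c : ℝ) (ℓ : ℕ) : ℕ := ⌈q ^ (-(c * (ℓ : ℝ)))⌉₊

/-- One step between adjacent boxes: the base point moves by `±ℓ e_i`. -/
def pathStep (ℓ : ℕ) (b b' : Site d) : Prop :=
  ∃ i : Fin d, ∃ s : Bool,
    b' = fun j => b j + if j = i then (if s then (ℓ : ℤ) else -(ℓ : ℤ)) else 0

/-- A `(d,k)`-super-good path of boxes of side `ℓ` inside the block `v + [L]^d`,
joining `v + [ℓ]^d` to `v + (L-ℓ)e_α + [ℓ]^d`, of length at most `3L`: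
all boxes good and at least one frameable. -/
def SuperGoodPath (k ℓ L : ℕ) (v : Site d) (α : Fin d) (η : Config d) : Prop :=
  ∃ n : ℕ, n ≤ 3 * L ∧ ∃ b : ℕ → Site d,
    b 0 = v ∧
    (b n = fun j => v j + if j = α then (L : ℤ) - (ℓ : ℤ) else 0) ∧
    (∀ m < n, pathStep ℓ (b m) (b (m + 1))) ∧
    (∀ m ≤ n, genBox (corner (b m)) Finset.univ ℓ ⊆ genBox (corner v) Finset.univ L) ∧
    (∀ m ≤ n, GoodBox k (corner (b m)) Finset.univ ℓ η) ∧
    (∃ m ≤ n, Frameable k (corner (b m)) Finset.univ ℓ η)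

/-- minimal corner of the external face of the box `genBox a univ m` in
direction `j`, on the positive (`s = true`) or negative side. -/
def faceBase (a : Site d) (m : ℕ) (j : Fin d) (s : Bool) : Site d :=
  Function.update a j (if s then a j + m else a j - 1)

/-- The face `F` is adjacent to the vertex `v`. -/
def FaceNear (v : Site d) (F : Set (Site d)) : Prop := ∃ x ∈ F, ∀ i, |x i - v i| ≤ 1

/-- All `(d-1)`-dimensional external faces of the box `genBox a univ m` that are
adjacent to the vertex `v` are `(d-1, k-1)`-good. -/
def GoodFacesAt (k : ℕ) (a : Site d) (m : ℕ) (v : Site d) (η : Config d) : Prop :=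
  ∀ (j : Fin d) (s : Bool),
    FaceNear v (genBox (faceBase a m j s) (Finset.univ.erase j) m) →
    GoodBox (k - 1) (faceBase a m j s) (Finset.univ.erase j) m η

/-- The coarse vertices `v` and `v + (L+1)e_α` are `(d,k)`-block-connected. -/
def BlockConnected (k ℓ L : ℕ) (v : Site d) (α : Fin d) (η : Config d) : Prop :=
  SuperGoodPath k ℓ L v α η ∧
  GoodFacesAt k (corner v) ℓ v η ∧
  GoodFacesAt k (corner (fun j => v j + if j = α then (L : ℤ) - (ℓ : ℤ) else 0)) (ℓ + 1)
    (fun j => v j + if j = α then (L : ℤ) + 1 else 0) η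

/-! ### `T`-step moves -/

/-- A `T`-step move with domain determined by the set of configurations `M`,
whose transitions are legal KA-`k`f transitions contained in `V`,
keeping track of the position of a marked particle. -/
structure TStepMove (d k : ℕ) (M : Set (Config d)) (V : Set (Site d)) (T : ℕ) where
  conf : Config d → ℕ → Config d
  pos : Config d → Site d → ℕ → Site d
  conf_zero : ∀ η ∈ M, conf η 0 = η
  pos_zero : ∀ η ∈ M, ∀ z : Site d, η z = true → pos η z 0 = z
  step : ∀ η ∈ M, ∀ z : Site d, η z = true → ∀ t < T,
    (conf η (t + 1) = conf η t ∧ pos η z (t + 1) = pos η z t) ∨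
    ∃ x y, adj x y ∧ x ∈ V ∧ y ∈ V ∧ conf η t x = true ∧ conf η t y = false ∧
      constraint k (conf η t) x y ∧ conf η (t + 1) = swap (conf η t) x y ∧
      pos η z (t + 1) = if pos η z t = x then y else pos η z t

/-- `Loss(M) ≤ K` : at every step, at most `2^K` configurations of the domain
have a common image. -/
def LossBoundedBy {d k : ℕ} {M : Set (Config d)} {V : Set (Site d)} {T : ℕ}
    (mv : TStepMove d k M V T) (K : ℝ) : Prop :=
  ∀ t < T, ∀ η' ∈ M, ∃ S : Finset (Config d),
    {η ∈ M | mv.conf η t = mv.conf η' t ∧ mv.conf η (t + 1) = mv.conf η' (t + 1)} ⊆ ↑S ∧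
    (S.card : ℝ) ≤ (2 : ℝ) ^ K

/-! ### Bond configurations on the coarse lattice -/

/-- A bond configuration on the coarse lattice: the edge `(i, α)` joins the
coarse vertices of index `i` and `i + e_α`. -/
abbrev BondConfig (d : ℕ) := (Site d × Fin d) → Bool

def IsLocalBond (g : BondConfig d → ℝ) : Prop :=
  ∃ S : Finset (Site d × Fin d), ∀ ω ω' : BondConfig d, (∀ e ∈ S, ω e = ω' e) → g ω = g ω'

/-- Translation of a bond configuration by a coarse index vector. -/
def bondShift (v : Site d) (ω : BondConfig d) : BondConfig d := fun e => (ω (e.1 - v, e.2))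

/-- Two coarse indices joined by an open bond. -/
def bondRel (ω : BondConfig d) (i j : Site d) : Prop :=
  (∃ α, j = i + eVec d α ∧ ω (i, α) = true) ∨ (∃ α, i = j + eVec d α ∧ ω (j, α) = true)

/-- The event `{0 ↔ ∞}`: the origin lies in an infinite open cluster. -/
def InfiniteCluster : Set (BondConfig d) :=
  {ω | {j : Site d | Relation.ReflTransGen (bondRel ω) origin j}.Infinite}

/-- The coarse index of the neighbour `± e_α` of the coarse origin. -/
def coarseIdx (d : ℕ) (α : Fin d) (s : Bool) : Site d :=
  if s then eVec d α else -(eVec d α)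

/-- The actual lattice vector `±(L+1) e_α` of a coarse neighbour of the origin. -/
def coarseVecZ (d L : ℕ) (α : Fin d) (s : Bool) : Site d :=
  fun j => ((L : ℤ) + 1) * coarseIdx d α s j

/-- Indicator of the bond between the coarse origin and its neighbour `± e_α`. -/
def edgeInd (ω : BondConfig d) (α : Fin d) (s : Bool) : ℝ≥0∞ :=
  if (if s then ω (origin, α) else ω (-(eVec d α), α)) = true then 1 else 0

/-- The auxiliary quadratic form `u ↦ u ⬝ D_aux u`. -/
def QauxForm (d L : ℕ) (μstar : Measure (BondConfig d)) (u : Fin d → ℝ) : ℝ≥0∞ :=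
  ⨅ g : {g : BondConfig d → ℝ // IsLocalBond g},
    ∑ α : Fin d, ∑ s : Bool,
      ∫⁻ ω, edgeInd ω α s *
        ENNReal.ofReal (((if s then (1 : ℝ) else -1) * ((L : ℝ) + 1) * u α +
          g.1 (bondShift (coarseIdx d α s) ω) - g.1 ω) ^ 2) ∂μstar

/-- Indicator (on microscopic configurations) that the coarse origin and its
neighbour `± e_α` are block-connected, for an abstract notion `BC`. -/
def microEdgeInd (BC : Site d → Fin d → Config d → Bool) (α : Fin d) (s : Bool)
    (η : Config d) : ℝ≥0∞ :=
  if (if s then BC origin α η else BC (-(eVec d α)) α η) = true then 1 else 0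

/-- The microscopic comparison form
`u ↦ inf_f Σ_{i ∼ 0} μ₀[ η̄_{0i} (u·i + f(τ_i η^{0,i}) - f(η))² ]`. -/
def microForm (d k L : ℕ) (BC : Site d → Fin d → Config d → Bool)
    (μ0 : Measure (Config d)) (u : Fin d → ℝ) : ℝ≥0∞ :=
  ⨅ f : {f : Config d → ℝ // IsLocal f},
    ∑ α : Fin d, ∑ s : Bool,
      ∫⁻ η, microEdgeInd BC α s η *
        ENNReal.ofReal (((if s then (1 : ℝ) else -1) * ((L : ℝ) + 1) * u α +
          f.1 (shift (coarseVecZ d L α s) (swap η origin (coarseVecZ d L α s))) - f.1 η) ^ 2)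
        ∂μ0

/-! ### d = 2 geometry -/

/-- The column `y + {c} × [ℓ]` in `ℤ²`. -/
def col2 (y : Site 2) (c : ℤ) (ℓ : ℕ) : Set (Site 2) :=
  {x | x 0 = y 0 + c ∧ y 1 + 1 ≤ x 1 ∧ x 1 ≤ y 1 + ℓ}

/-- The box `b + [ℓ]²`. -/
def box2 (b : Site 2) (ℓ : ℕ) : Set (Site 2) := genBox (corner b) Finset.univ ℓ

/-- `S` contains at least two empty sites. -/
def TwoEmptyIn (S : Set (Site 2)) (η : Config 2) : Prop :=
  ∃ a ∈ S, ∃ b ∈ S, a ≠ b ∧ η a = false ∧ η b = false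

/-- Every row and every column of the box `b + [ℓ]²` contains at least two
empty sites. -/
def RowsColsOK (b : Site 2) (ℓ : ℕ) (η : Config 2) : Prop :=
  (∀ t : ℕ, 1 ≤ t → t ≤ ℓ → TwoEmptyIn {z | z ∈ box2 b ℓ ∧ z 1 = b 1 + t} η) ∧
  (∀ t : ℕ, 1 ≤ t → t ≤ ℓ → TwoEmptyIn {z | z ∈ box2 b ℓ ∧ z 0 = b 0 + t} η)

/-- The box `b + [ℓ]²` is `(2,2)`-good: two empty sites in every row and
column, plus one additional empty site. -/
def Good22 (b : Site 2) (ℓ : ℕ) (η : Config 2) : Prop :=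
  RowsColsOK b ℓ η ∧
  ∃ w ∈ box2 b ℓ, η w = false ∧ RowsColsOK b ℓ (Function.update η w true)

/-! ### Bootstrap percolation -/

/-- The box `[-ℓ, ℓ]^d`. -/
def bigBox (d ℓ : ℕ) : Set (Site d) := {x | ∀ i, |x i| ≤ (ℓ : ℤ)}

/-- One step of `k`-neighbour bootstrap percolation on `[-ℓ,ℓ]^d` (sites
outside the box are left unchanged). -/
def BPstep (k ℓ : ℕ) (η : Config d) : Config d := fun x =>
  if x ∈ bigBox d ℓ then
    (if η x = true ∧
        ((neighbors x).filter fun z => z ∈ bigBox d ℓ ∧ η z = false).card < k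
      then true else false)
  else η x

/-- The limiting configuration of bootstrap percolation. -/
def BPinf (k ℓ : ℕ) (η : Config d) : Config d := fun x =>
  if ∀ t : ℕ, (BPstep k ℓ)^[t] η x = true then true else false

/-- One step along the bootstrap percolation cluster. -/
def bpRel (k ℓ : ℕ) (η : Config d) (a b : Site d) : Prop :=
  adj a b ∧ b ∈ bigBox d ℓ ∧ BPinf k ℓ η b = false

/-- The bootstrap percolation cluster of the origin. -/
def bpCluster (k ℓ : ℕ) (η : Config d) : Set (Site d) :=
  {x | Relation.ReflTransGen (bpRel k ℓ η) origin x}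

def coord0 (x : Site d) : ℤ := if h : 0 < d then x ⟨0, h⟩ else 0

/-- The first coordinate of the rightmost site of the bootstrap percolation
cluster of the origin. -/
def bpRightmost (k ℓ : ℕ) (η : Config d) : ℝ :=
  sSup ((fun x : Site d => (coord0 x : ℝ)) '' bpCluster k ℓ η)

/-- The test function `f`, computed on the restriction to `[-ℓ,ℓ]^d`. -/
def fTest (d k ℓ : ℕ) (η : Config d) : ℝ :=
  bpRightmost k ℓ (fillOutside (bigBox d ℓ) η)

/-- The event `B` : the bootstrap percolation cluster of the origin contains a
site of `ℓ^∞`-norm at least `ℓ - 1`. -/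
def Bevent (k ℓ : ℕ) (η : Config d) : Prop :=
  ∃ x ∈ bpCluster k ℓ η, ∃ i, (ℓ : ℤ) - 1 ≤ |x i|

/-!
Write `⋆ = (Y - 1, s)`. Pick the empty sites `(Y + 1, r)` and `(Y - 1, w)`, with `r, w ≠ s`,
closest to row `s` in the two side columns. Since the middle column `Y` is empty, these holes
can be slid along their columns to the rows next to `s`; then the tagged particle crosses the
empty column in two hops (if `(Y + 1, s)` is occupied, its particle first parks in column `Y` and
ends up at `⋆`), and the holes are slid back. This takes `O(ℓ)` steps. The run is determined by
`r`, `w` and `η (Y + 1, s)`, at most `2ℓ²` choices, and every step is a transposition, so the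
configuration at any time together with the run determines `η`: the loss is `O(log ℓ)`.
-/

theorem adj_comm {x y : Site d} : adj x y ↔ adj y x := by
  simp only [adj, abs_sub_comm (x _)]

theorem not_adj_self (x : Site d) : ¬adj x x := by
  simp [adj]

theorem mem_neighbors_of_adj {x y : Site d} (h : adj x y) : y ∈ neighbors x := by
  obtain ⟨i, hi⟩ : ∃ i, x i ≠ y i := by
    by_contra! hxy
    simp [adj, hxy] at h
  rw [adj, ← Finset.add_sum_erase _ _ (Finset.mem_univ i)] at h
  have hpos : 0 < |x i - y i| := abs_pos.mpr (sub_ne_zero.mpr hi)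
  have hrest : ∑ j ∈ Finset.univ.erase i, |x j - y j| = 0 := by
    have := Finset.sum_nonneg fun j (_ : j ∈ Finset.univ.erase i) => abs_nonneg (x j - y j)
    omega
  have hyx : ∀ j ≠ i, y j = x j := fun j hj => by
    have := (Finset.sum_eq_zero_iff_of_nonneg fun j _ => abs_nonneg (x j - y j)).mp hrest j
      (Finset.mem_erase.mpr ⟨hj, Finset.mem_univ j⟩)
    rw [abs_eq_zero, sub_eq_zero] at this
    exact this.symm
  have hyi : y i = x i + 1 ∨ y i = x i - 1 := by
    rcases abs_eq zero_le_one |>.mp (show |x i - y i| = 1 by omega) with h' | h' <;> omega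
  refine Finset.mem_image.mpr ⟨(i, decide (y i = x i + 1)), Finset.mem_univ _, funext fun j => ?_⟩
  rcases eq_or_ne j i with rfl | hj
  · rcases hyi with h' | h' <;> simp only [h', Function.update_self, decide_eq_true_eq] <;>
      split_ifs <;> omega
  · rw [Function.update_of_ne hj, hyx j hj]

@[simp] theorem swap_apply_left (σ : Config d) (x y : Site d) : swap σ x y x = σ y := by
  simp [swap]

@[simp] theorem swap_apply_right (σ : Config d) (x y : Site d) : swap σ x y y = σ x := by
  by_cases h : y = x <;> simp [swap, h]

theorem swap_apply_of_ne_of_ne {σ : Config d} {x y z : Site d} (hx : z ≠ x) (hy : z ≠ y) :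
    swap σ x y z = σ z := by
  simp [swap, hx, hy]

@[simp] theorem swap_self (σ : Config d) (x : Site d) : swap σ x x = σ := by
  funext z; by_cases h : z = x <;> simp [swap, h]

theorem swap_comm (σ : Config d) (x y : Site d) : swap σ x y = swap σ y x := by
  funext z; simp only [swap]; split_ifs <;> simp_all

@[simp] theorem swap_swap_self (σ : Config d) (x y : Site d) : swap (swap σ x y) x y = σ := by
  funext z; simp only [swap]; split_ifs <;> simp_all

theorem swap_swap_of_eq {σ : Config d} {a b c : Site d} (h : σ b = σ c) :
    swap (swap σ a b) b c = swap σ a c := by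
  funext z; simp only [swap]; split_ifs <;> simp_all

theorem swap_conj {σ : Config d} {a b x y : Site d} (hxa : x ≠ a) (hxb : x ≠ b) (hya : y ≠ a)
    (hyb : y ≠ b) : swap (swap (swap σ a b) x y) a b = swap σ x y := by
  funext z; simp only [swap]; split_ifs <;> simp_all

theorem swap_cycle {σ : Config d} {x y z : Site d} (hxy : x ≠ y) (hyz : y ≠ z) (hxz : x ≠ z) :
    swap (swap (swap σ y z) x y) z x = swap σ x y := by
  funext w; simp only [swap]; split_ifs <;> simp_all

/-- A run is a list of hops `(x, y)`, each moving the particle at `x` to the empty site `y`. -/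
def runConf (L : List (Site d × Site d)) (σ : Config d) : Config d :=
  L.foldl (fun σ h => swap σ h.1 h.2) σ

def runPos (L : List (Site d × Site d)) (z : Site d) : Site d :=
  L.foldl (fun z h => if z = h.1 then h.2 else z) z

def IsLegalHop (k : ℕ) (V : Set (Site d)) (σ : Config d) (x y : Site d) : Prop :=
  adj x y ∧ x ∈ V ∧ y ∈ V ∧ σ x = true ∧ σ y = false ∧ constraint k σ x y

def IsLegalRun (k : ℕ) (V : Set (Site d)) : Config d → List (Site d × Site d) → Prop
  | _, [] => True
  | σ, h :: L => IsLegalHop k V σ h.1 h.2 ∧ IsLegalRun k V (swap σ h.1 h.2) L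

@[simp] theorem runConf_nil (σ : Config d) : runConf [] σ = σ := rfl

@[simp] theorem runConf_cons (h : Site d × Site d) (L : List (Site d × Site d)) (σ : Config d) :
    runConf (h :: L) σ = runConf L (swap σ h.1 h.2) := rfl

theorem runConf_append (L L' : List (Site d × Site d)) (σ : Config d) :
    runConf (L ++ L') σ = runConf L' (runConf L σ) :=
  List.foldl_append

theorem runPos_append (L L' : List (Site d × Site d)) (z : Site d) :
    runPos (L ++ L') z = runPos L' (runPos L z) :=
  List.foldl_append

theorem runPos_eq_self {L : List (Site d × Site d)} {z : Site d} (h : ∀ p ∈ L, p.1 ≠ z) :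
    runPos L z = z := by
  induction L with
  | nil => rfl
  | cons p L ih =>
    simp only [List.forall_mem_cons] at h
    simp only [runPos, List.foldl_cons, if_neg (Ne.symm h.1)]
    exact ih h.2

theorem runConf_reverse_runConf (L : List (Site d × Site d)) (σ : Config d) :
    runConf L.reverse (runConf L σ) = σ := by
  induction L generalizing σ with
  | nil => rfl
  | cons h L ih => simp [runConf_append, ih]

theorem isLegalRun_append {k : ℕ} {V : Set (Site d)} {L L' : List (Site d × Site d)}
    {σ : Config d} :
    IsLegalRun k V σ (L ++ L') ↔ IsLegalRun k V σ L ∧ IsLegalRun k V (runConf L σ) L' := by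
  induction L generalizing σ with
  | nil => simp [IsLegalRun]
  | cons h L ih => simp [IsLegalRun, ih, and_assoc]

theorem IsLegalRun.step {k : ℕ} {V : Set (Site d)} {σ : Config d} {L : List (Site d × Site d)}
    (hL : IsLegalRun k V σ L) (t : ℕ) (z : Site d) :
    (runConf (L.take (t + 1)) σ = runConf (L.take t) σ ∧
        runPos (L.take (t + 1)) z = runPos (L.take t) z) ∨
      ∃ x y, adj x y ∧ x ∈ V ∧ y ∈ V ∧ runConf (L.take t) σ x = true ∧
        runConf (L.take t) σ y = false ∧ constraint k (runConf (L.take t) σ) x y ∧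
        runConf (L.take (t + 1)) σ = swap (runConf (L.take t) σ) x y ∧
        runPos (L.take (t + 1)) z = if runPos (L.take t) z = x then y else runPos (L.take t) z := by
  by_cases ht : t < L.length
  · right
    have htake : L.take (t + 1) = L.take t ++ [L[t]] := by
      rw [List.take_add_one, List.getElem?_eq_getElem ht]; rfl
    have hlegal : IsLegalHop k V (runConf (L.take t) σ) L[t].1 L[t].2 := by
      rw [← List.take_append_drop t L, List.drop_eq_getElem_cons ht, isLegalRun_append] at hL
      exact hL.2.1
    obtain ⟨hadj, hx, hy, hσx, hσy, hc⟩ := hlegal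
    exact ⟨_, _, hadj, hx, hy, hσx, hσy, hc, by rw [htake, runConf_append]; rfl,
      by rw [htake, runPos_append]; rfl⟩
  · left
    rw [List.take_of_length_le (by omega), List.take_of_length_le (by omega)]
    exact ⟨rfl, rfl⟩

def RunsTo (k : ℕ) (V : Set (Site d)) (L : List (Site d × Site d)) (σ σ' : Config d) : Prop :=
  IsLegalRun k V σ L ∧ runConf L σ = σ'

def Carries (k : ℕ) (V : Set (Site d)) (L : List (Site d × Site d)) (σ : Config d)
    (x y : Site d) : Prop :=
  RunsTo k V L σ (swap σ x y) ∧ runPos L x = y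

theorem RunsTo.append {k : ℕ} {V : Set (Site d)} {L L' : List (Site d × Site d)}
    {σ σ' σ'' : Config d} (h : RunsTo k V L σ σ') (h' : RunsTo k V L' σ' σ'') :
    RunsTo k V (L ++ L') σ σ'' := by
  obtain ⟨hL, rfl⟩ := h
  exact ⟨isLegalRun_append.mpr ⟨hL, h'.1⟩, by rw [runConf_append, h'.2]⟩

def TStepMove.ofRuns {k : ℕ} {M : Set (Config d)} {V : Set (Site d)} {T : ℕ}
    (run : Config d → List (Site d × Site d)) (hlegal : ∀ η, IsLegalRun k V η (run η)) :
    TStepMove d k M V T where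
  conf η t := runConf ((run η).take t) η
  pos η z t := runPos ((run η).take t) z
  conf_zero _ _ := rfl
  pos_zero _ _ _ _ := rfl
  step η _ z _ t _ := (hlegal η).step t z

/-- Hops are transpositions, so the configuration after `t` hops of a known run determines the
initial one: configurations sharing their time-`t` configuration are told apart by their runs. -/
theorem lossBoundedBy_ofRuns {k : ℕ} {M : Set (Config d)} {V : Set (Site d)} {T : ℕ}
    {run : Config d → List (Site d × Site d)} (hlegal : ∀ η, IsLegalRun k V η (run η))
    (S : Finset (List (Site d × Site d))) (hS : ∀ η, run η ∈ S) {K : ℝ}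
    (hK : (S.card : ℝ) ≤ 2 ^ K) :
    LossBoundedBy (TStepMove.ofRuns (M := M) (T := T) run hlegal) K := by
  intro t _ η' _
  refine ⟨S.image fun L => runConf (L.take t).reverse (runConf ((run η').take t) η'), ?_,
    le_trans (by exact_mod_cast Finset.card_image_le) hK⟩
  rintro η ⟨-, hη, -⟩
  refine Finset.mem_image.mpr ⟨run η, hS η, ?_⟩
  simp only [TStepMove.ofRuns] at hη
  rw [← hη, runConf_reverse_runConf]

theorem exists_tStepMove_of_carries {k : ℕ} {M : Set (Config d)} {V : Set (Site d)} {T : ℕ}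
    (S : Finset (List (Site d × Site d))) (hlen : ∀ L ∈ S, L.length ≤ T) {K : ℝ}
    (hK : (S.card + 1 : ℝ) ≤ 2 ^ K) (z z' : Site d) :
    ∃ mv : TStepMove d k M V T, LossBoundedBy mv K ∧
      ∀ η, (∃ L ∈ S, Carries k V L η z z') → mv.conf η T = swap η z z' ∧ mv.pos η z T = z' := by
  let run η := if h : ∃ L ∈ S, Carries k V L η z z' then h.choose else []
  have hchosen : ∀ η, (∃ L ∈ S, Carries k V L η z z') → run η ∈ S ∧ Carries k V (run η) η z z' :=
    fun η h => by simpa only [run, dif_pos h] using h.choose_spec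
  have hlegal : ∀ η, IsLegalRun k V η (run η) := fun η => by
    by_cases h : ∃ L ∈ S, Carries k V L η z z'
    · exact (hchosen η h).2.1.1
    · simp only [run, dif_neg h]; trivial
  refine ⟨TStepMove.ofRuns run hlegal,
    lossBoundedBy_ofRuns hlegal (insert [] S) (fun η => ?_) ?_, fun η hη => ?_⟩
  · by_cases h : ∃ L ∈ S, Carries k V L η z z'
    · exact Finset.mem_insert_of_mem (hchosen η h).1
    · simp only [run, dif_neg h]; exact Finset.mem_insert_self _ _
  · exact le_trans (by exact_mod_cast Finset.card_insert_le [] S) hK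
  · obtain ⟨hS, ⟨-, hconf⟩, hpos⟩ := hchosen η hη
    simp only [TStepMove.ofRuns, List.take_of_length_le (hlen _ hS)]
    exact ⟨hconf, hpos⟩

theorem isLegalHop_two {σ : Config d} {x y : Site d} (hxy : adj x y) (hx : σ x = true)
    (hy : σ y = false) (hx' : ∃ z, adj x z ∧ z ≠ y ∧ σ z = false)
    (hy' : ∃ z, adj y z ∧ z ≠ x ∧ σ z = false) : IsLegalHop 2 Set.univ σ x y := by
  obtain ⟨zx, hzx, hzxy, hσzx⟩ := hx'
  obtain ⟨zy, hzy, hzyx, hσzy⟩ := hy'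
  refine ⟨hxy, trivial, trivial, hx, hy, ?_, ?_⟩ <;> apply Finset.one_le_card.mpr
  · exact ⟨zx, Finset.mem_filter.mpr ⟨mem_neighbors_of_adj hzx, hzxy, hσzx⟩⟩
  · exact ⟨zy, Finset.mem_filter.mpr ⟨mem_neighbors_of_adj hzy, hzyx, hσzy⟩⟩

def transferRun (x m y : Site d) : List (Site d × Site d) := [(x, m), (m, y)]

theorem carries_transferRun {σ : Config d} {x m y : Site d} (hxm : adj x m) (hmy : adj m y)
    (hxy : x ≠ y) (hx : σ x = true) (hm : σ m = false) (hy : σ y = false)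
    (hx' : ∃ z, adj x z ∧ z ≠ m ∧ σ z = false) (hm' : ∃ z, adj m z ∧ z ≠ x ∧ σ z = false)
    (hy' : ∃ z, adj y z ∧ z ≠ m ∧ z ≠ x ∧ σ z = false) :
    Carries 2 Set.univ (transferRun x m y) σ x y := by
  have hmy' : m ≠ y := fun h => not_adj_self m (h ▸ hmy)
  obtain ⟨zy, hzy, hzym, hzyx, hσzy⟩ := hy'
  refine ⟨⟨⟨isLegalHop_two hxm hx hm hx' hm', isLegalHop_two hmy ?_ ?_ ?_ ?_, trivial⟩, ?_⟩, ?_⟩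
  · simpa using hx
  · rwa [swap_apply_of_ne_of_ne (Ne.symm hxy) (Ne.symm hmy')]
  · exact ⟨x, adj_comm.mp hxm, hxy, by simpa using hm⟩
  · exact ⟨zy, hzy, hzym, by rwa [swap_apply_of_ne_of_ne hzyx hzym]⟩
  · simp only [transferRun, runConf_cons, runConf_nil]
    exact swap_swap_of_eq (hm.trans hy.symm)
  · simp [transferRun, runPos]

/-- The particle at `x` crosses to `y` through `m`; if `y` is occupied, its particle is first parked
at `m'` (through `y'`) and afterwards takes the place of `x`. -/
def crossRun (x m y m' y' : Site d) (flag : Bool) : List (Site d × Site d) :=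
  if flag then transferRun y y' m' ++ transferRun x m y ++ transferRun m' m x
  else transferRun x m y

theorem carries_crossRun {σ : Config d} {x m y m' y' x' : Site d} (hxm : adj x m)
    (hmy : adj m y) (hmm' : adj m m') (hm'y' : adj m' y') (hyy' : adj y y') (hxx' : adj x x')
    (hnodup : [x, m, y, m', y', x'].Nodup) (hx : σ x = true) (hm : σ m = false)
    (hm' : σ m' = false) (hy' : σ y' = false) (hx' : σ x' = false) :
    Carries 2 Set.univ (crossRun x m y m' y' (σ y)) σ x y := by
  simp only [List.nodup_cons, List.mem_cons, List.not_mem_nil, List.nodup_nil, not_or,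
    or_false, not_false_eq_true, and_true] at hnodup
  obtain ⟨⟨-, hxy, hxm', hxy', hxx'₀⟩, ⟨hmy₀, hmm'₀, hmy'₀, hmx'₀⟩, ⟨hym', hyy'₀, hyx'₀⟩,
    ⟨hm'y'₀, hm'x'₀⟩, hy'x'₀⟩ := hnodup
  cases hy : σ y
  · exact carries_transferRun hxm hmy hxy hx hm hy ⟨x', hxx', Ne.symm hmx'₀, hx'⟩
      ⟨y, hmy, Ne.symm hxy, hy⟩ ⟨y', hyy', Ne.symm hmy'₀, Ne.symm hxy', hy'⟩
  · have h₁ := carries_transferRun hyy' (adj_comm.mp hm'y') hym' hy hy' hm'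
      ⟨m, adj_comm.mp hmy, hmy'₀, hm⟩ ⟨m', adj_comm.mp hm'y', Ne.symm hym', hm'⟩
      ⟨m, adj_comm.mp hmm', hmy'₀, hmy₀, hm⟩
    set σ₁ := swap σ y m'
    have h₂ : Carries 2 Set.univ (transferRun x m y) σ₁ x y :=
      carries_transferRun hxm hmy hxy (by grind [swap]) (by grind [swap])
        (by grind [swap]) ⟨x', hxx', Ne.symm hmx'₀, by grind [swap]⟩
        ⟨y, hmy, Ne.symm hxy, by grind [swap]⟩
        ⟨y', hyy', Ne.symm hmy'₀, Ne.symm hxy', by grind [swap]⟩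
    set σ₂ := swap σ₁ x y
    have h₃ : Carries 2 Set.univ (transferRun m' m x) σ₂ m' x :=
      carries_transferRun (adj_comm.mp hmm') (adj_comm.mp hxm) (Ne.symm hxm')
        (by grind [swap]) (by grind [swap]) (by grind [swap])
        ⟨y', hm'y', Ne.symm hmy'₀, by grind [swap]⟩
        ⟨x, adj_comm.mp hxm, hxm', by grind [swap]⟩
        ⟨x', hxx', Ne.symm hmx'₀, Ne.symm hm'x'₀, by grind [swap]⟩
    have hconf := (h₁.1.append h₂.1).append h₃.1
    rw [swap_cycle hxy hym' hxm'] at hconf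
    refine ⟨hconf, ?_⟩
    rw [crossRun, if_pos rfl, runPos_append, runPos_append, runPos_eq_self (z := x), h₂.2,
      runPos_eq_self]
    · simp [transferRun, Ne.symm hym', hmy₀]
    · simp [transferRun, Ne.symm hxy, Ne.symm hxy']

def slideRun (p : ℕ → Site d) : ℕ → List (Site d × Site d)
  | 0 => []
  | n + 1 => (p n, p (n + 1)) :: slideRun p n

theorem runPos_slideRun {p : ℕ → Site d} {n : ℕ} {z : Site d} (hz : ∀ i < n, p i ≠ z) :
    runPos (slideRun p n) z = z := by
  induction n with
  | zero => rfl
  | succ n ih =>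
    simp only [slideRun, runPos, List.foldl_cons, if_neg (hz n n.lt_succ_self).symm]
    exact ih fun i hi => hz i (by omega)

theorem runsTo_slideRun {p q : ℕ → Site d} {n : ℕ} {σ : Config d}
    (hp : ∀ i < n, adj (p i) (p (i + 1))) (hinj : Set.InjOn p (Set.Iic n))
    (hq : ∀ i ≤ n, adj (p i) (q i)) (hqp : ∀ i ≤ n, ∀ j ≤ n, q i ≠ p j)
    (hσq : ∀ i ≤ n, σ (q i) = false) (hσp : ∀ i < n, σ (p i) = true) (hσn : σ (p n) = false) :
    RunsTo 2 Set.univ (slideRun p n) σ (swap σ (p 0) (p n)) := by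
  induction n generalizing σ with
  | zero => exact ⟨trivial, by simp [slideRun]⟩
  | succ n ih =>
    have hne : ∀ i ≤ n + 1, ∀ j ≤ n + 1, i ≠ j → p i ≠ p j := fun i hi j hj hij h =>
      hij (hinj (Set.mem_Iic.mpr hi) (Set.mem_Iic.mpr hj) h)
    have hlegal : IsLegalHop 2 Set.univ σ (p n) (p (n + 1)) :=
      isLegalHop_two (hp n n.lt_succ_self) (hσp n n.lt_succ_self) hσn
        ⟨q n, hq n (by omega), hqp n (by omega) (n + 1) le_rfl, hσq n (by omega)⟩
        ⟨q (n + 1), hq (n + 1) le_rfl, hqp (n + 1) le_rfl n (by omega), hσq (n + 1) le_rfl⟩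
    have ih' := ih (σ := swap σ (p n) (p (n + 1))) (fun i hi => hp i (by omega))
      (hinj.mono (Set.Iic_subset_Iic.mpr n.le_succ)) (fun i hi => hq i (by omega))
      (fun i hi j hj => hqp i (by omega) j (by omega))
      (fun i hi => by
        rw [swap_apply_of_ne_of_ne (hqp i (by omega) n (by omega))
          (hqp i (by omega) (n + 1) le_rfl)]
        exact hσq i (by omega))
      (fun i hi => by
        rw [swap_apply_of_ne_of_ne (hne i (by omega) n (by omega) (by omega))
          (hne i (by omega) (n + 1) le_rfl (by omega))]
        exact hσp i (by omega))
      (by simpa using hσn)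
    refine ⟨⟨hlegal, ih'.1⟩, ?_⟩
    rw [slideRun, runConf_cons, ih'.2]
    rcases Nat.eq_zero_or_pos n with rfl | hn
    · simp
    · rw [swap_comm _ (p 0), swap_comm σ (p n), swap_comm σ (p 0)]
      exact swap_swap_of_eq ((hσp n (by omega)).trans (hσp 0 (by omega)).symm)

section Plane

open Set

def pt (a b : ℤ) : Site 2 := ![a, b]

@[simp] theorem pt_zero (a b : ℤ) : pt a b 0 = a := rfl

@[simp] theorem pt_one (a b : ℤ) : pt a b 1 = b := rfl

@[simp] theorem pt_inj {a b c e : ℤ} : pt a b = pt c e ↔ a = c ∧ b = e :=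
  ⟨fun h => ⟨congrFun h 0, congrFun h 1⟩, fun ⟨ha, hb⟩ => ha ▸ hb ▸ rfl⟩

theorem adj_pt_row {a b c : ℤ} (h : |a - c| = 1) : adj (pt a b) (pt c b) := by
  simp [adj, Fin.sum_univ_two, h]

theorem adj_pt_col {a b e : ℤ} (h : |b - e| = 1) : adj (pt a b) (pt a e) := by
  simp [adj, Fin.sum_univ_two, h]

def columnSlide (X a b : ℤ) : List (Site 2 × Site 2) :=
  slideRun (fun i => pt X (if a ≤ b then a + i else a - i)) (b - a).natAbs

/-- The hole at row `b` of column `X` can be slid to row `a`; the empty stretch of the adjacent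
column `X'` makes every hop legal. -/
def SlideReady (σ : Config 2) (X X' a b : ℤ) : Prop :=
  (∀ m ∈ uIcc a b, σ (pt X' m) = false) ∧ σ (pt X b) = false ∧
    ∀ m ∈ uIcc a b, m ≠ b → σ (pt X m) = true

def slideZone (X X' a b : ℤ) : Set (Site 2) :=
  {z | (z 0 = X ∨ z 0 = X') ∧ z 1 ∈ uIcc a b}

theorem runPos_columnSlide {X a b : ℤ} {z : Site 2} (hz : ∀ m ∈ uIcc a b, pt X m ≠ z) :
    runPos (columnSlide X a b) z = z :=
  runPos_slideRun fun i hi => hz _ (by rw [mem_uIcc]; split_ifs <;> omega)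

theorem runsTo_columnSlide {σ : Config 2} {X X' a b : ℤ} (hX : |X - X'| = 1)
    (h : SlideReady σ X X' a b) :
    RunsTo 2 univ (columnSlide X a b) σ (swap σ (pt X a) (pt X b)) := by
  obtain ⟨hX', hb, hfull⟩ := h
  have hXX' : X ≠ X' := by rintro rfl; simp at hX
  have hrow : ∀ i ≤ (b - a).natAbs, (if a ≤ b then a + i else a - i) ∈ uIcc a b := by
    intro i hi; rw [mem_uIcc]; split_ifs <;> omega
  have hend : (if a ≤ b then a + ((b - a).natAbs : ℕ) else a - ((b - a).natAbs : ℕ)) = b := by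
    split_ifs <;> omega
  have key := runsTo_slideRun (p := fun i => pt X (if a ≤ b then a + i else a - i))
    (q := fun i => pt X' (if a ≤ b then a + i else a - i)) (n := (b - a).natAbs) (σ := σ)
    (fun i _ => adj_pt_col (by rw [abs_eq zero_le_one]; split_ifs <;> omega))
    (fun i _ j _ h => by simp only [pt_inj] at h; split_ifs at h <;> omega)
    (fun i _ => adj_pt_row hX) (fun i _ j _ => by simp [Ne.symm hXX'])
    (fun i hi => hX' _ (hrow i hi))
    (fun i hi => hfull _ (hrow i hi.le) (by split_ifs <;> omega))
    (by simpa only [hend] using hb)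
  simpa only [columnSlide, hend, Nat.cast_zero, add_zero, sub_zero, ite_self] using key

theorem SlideReady.swap {σ : Config 2} {X X' a b : ℤ} (hXX' : X ≠ X')
    (h : SlideReady σ X X' a b) : SlideReady (swap σ (pt X a) (pt X b)) X X' b a := by
  obtain ⟨hX', hb, hfull⟩ := h
  refine ⟨fun m hm => ?_, by simpa using hb, fun m hm hma => ?_⟩
  · rw [swap_apply_of_ne_of_ne (by simp [Ne.symm hXX']) (by simp [Ne.symm hXX'])]
    exact hX' m (uIcc_comm a b ▸ hm)
  · rcases eq_or_ne m b with rfl | hmb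
    · simpa using hfull a left_mem_uIcc hma.symm
    · rw [swap_apply_of_ne_of_ne (by simpa using hma) (by simpa using hmb)]
      exact hfull m (uIcc_comm a b ▸ hm) hmb

theorem SlideReady.congr {σ τ : Config 2} {X X' a b : ℤ} (h : SlideReady σ X X' a b)
    (hτ : ∀ z ∈ slideZone X X' a b, τ z = σ z) : SlideReady τ X X' a b := by
  obtain ⟨hX', hb, hfull⟩ := h
  refine ⟨fun m hm => ?_, ?_, fun m hm hmb => ?_⟩
  · rw [hτ _ ⟨Or.inr rfl, hm⟩]; exact hX' m hm
  · rw [hτ _ ⟨Or.inl rfl, right_mem_uIcc⟩]; exact hb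
  · rw [hτ _ ⟨Or.inl rfl, hm⟩]; exact hfull m hm hmb

theorem Carries.conj_columnSlide {σ : Config 2} {X X' a b : ℤ} {A : List (Site 2 × Site 2)}
    {x y : Site 2} (hX : |X - X'| = 1) (h : SlideReady σ X X' a b)
    (hx : x ∉ slideZone X X' a b) (hy : y ∉ slideZone X X' a b)
    (hA : Carries 2 univ A (swap σ (pt X a) (pt X b)) x y) :
    Carries 2 univ (columnSlide X a b ++ A ++ columnSlide X b a) σ x y := by
  have hXX' : X ≠ X' := by rintro rfl; simp at hX
  have hzone : ∀ {z}, z ∉ slideZone X X' a b → ∀ m ∈ uIcc a b, pt X m ≠ z := by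
    rintro z hz m hm rfl; exact hz ⟨Or.inl rfl, hm⟩
  have hback := runsTo_columnSlide (σ := swap (swap σ (pt X a) (pt X b)) x y) hX
    ((h.swap hXX').congr fun z hz => swap_apply_of_ne_of_ne (by rintro rfl; exact hx (by
      simpa [slideZone, uIcc_comm] using hz)) (by rintro rfl; exact hy (by
      simpa [slideZone, uIcc_comm] using hz)))
  rw [swap_comm _ (pt X b), swap_conj (hzone hx a left_mem_uIcc).symm
    (hzone hx b right_mem_uIcc).symm (hzone hy a left_mem_uIcc).symm
    (hzone hy b right_mem_uIcc).symm] at hback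
  refine ⟨((runsTo_columnSlide hX h).append hA.1).append hback, ?_⟩
  rw [runPos_append, runPos_append, runPos_columnSlide (hzone hx), hA.2,
    runPos_columnSlide fun m hm => hzone hy m (uIcc_comm a b ▸ hm)]

def towards (s r : ℤ) : ℤ := if s < r then s + 1 else s - 1

theorem abs_sub_towards (s r : ℤ) : |s - towards s r| = 1 := by
  rw [abs_eq zero_le_one, towards]; split_ifs <;> omega

theorem mem_uIcc_of_mem_uIcc_towards {s r : ℤ} (hr : r ≠ s) :
    ∀ m ∈ uIcc (towards s r) r, m ∈ uIcc s r ∧ m ≠ s := by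
  intro m hm; rw [mem_uIcc, towards] at *; split_ifs at hm <;> omega

def jumpRun (Y s : ℤ) (flag : Bool) (r w : ℤ) : List (Site 2 × Site 2) :=
  columnSlide (Y + 1) (towards s r) r ++
    (columnSlide (Y - 1) (towards s w) w ++
      crossRun (pt (Y - 1) s) (pt Y s) (pt (Y + 1) s) (pt Y (towards s r))
        (pt (Y + 1) (towards s r)) flag ++
      columnSlide (Y - 1) w (towards s w)) ++
    columnSlide (Y + 1) r (towards s r)

theorem carries_jumpRun {η : Config 2} {Y s r w : ℤ} (hr : r ≠ s) (hw : w ≠ s)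
    (hcolr : ∀ m ∈ uIcc s r, η (pt Y m) = false) (hcolw : ∀ m ∈ uIcc s w, η (pt Y m) = false)
    (hR : η (pt (Y + 1) r) = false)
    (hRfull : ∀ m ∈ uIcc s r, m ≠ s → m ≠ r → η (pt (Y + 1) m) = true)
    (hW : η (pt (Y - 1) w) = false)
    (hWfull : ∀ m ∈ uIcc s w, m ≠ s → m ≠ w → η (pt (Y - 1) m) = true)
    (hst : η (pt (Y - 1) s) = true) :
    Carries 2 univ (jumpRun Y s (η (pt (Y + 1) s)) r w) η (pt (Y - 1) s) (pt (Y + 1) s) := by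
  have hr₁ := mem_uIcc_of_mem_uIcc_towards hr
  have hw₁ := mem_uIcc_of_mem_uIcc_towards hw
  have hadjr := abs_sub_towards s r
  have hadjw := abs_sub_towards s w
  unfold jumpRun
  generalize towards s r = r₁ at hr₁ hadjr ⊢
  generalize towards s w = w₁ at hw₁ hadjw ⊢
  have hr₁s : r₁ ≠ s := (hr₁ _ left_mem_uIcc).2
  have hw₁s : w₁ ≠ s := (hw₁ _ left_mem_uIcc).2
  have hreadyR : SlideReady η (Y + 1) Y r₁ r := ⟨fun m hm => hcolr m (hr₁ m hm).1, hR,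
    fun m hm hmr => hRfull m (hr₁ m hm).1 (hr₁ m hm).2 hmr⟩
  have hreadyW : SlideReady η (Y - 1) Y w₁ w := ⟨fun m hm => hcolw m (hw₁ m hm).1, hW,
    fun m hm hmw => hWfull m (hw₁ m hm).1 (hw₁ m hm).2 hmw⟩
  refine Carries.conj_columnSlide (x := pt (Y - 1) s) (y := pt (Y + 1) s) (by norm_num) hreadyR
    (fun h => by have := h.1; simp only [pt_zero] at this; omega) (fun h => (hr₁ s h.2).2 rfl) ?_
  have hτ₁ : ∀ z : Site 2, z 0 ≠ Y + 1 → swap η (pt (Y + 1) r₁) (pt (Y + 1) r) z = η z :=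
    fun z hz => swap_apply_of_ne_of_ne (by rintro rfl; simp at hz) (by rintro rfl; simp at hz)
  refine Carries.conj_columnSlide (x := pt (Y - 1) s) (y := pt (Y + 1) s) (by norm_num)
    (hreadyW.congr fun z hz => hτ₁ z (by rcases hz.1 with h | h <;> omega))
    (fun h => (hw₁ s h.2).2 rfl)
    (fun h => by have := h.1; simp only [pt_zero] at this; omega) ?_
  have hflag : swap (swap η (pt (Y + 1) r₁) (pt (Y + 1) r)) (pt (Y - 1) w₁) (pt (Y - 1) w)
      (pt (Y + 1) s) = η (pt (Y + 1) s) := by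
    grind [swap, pt_inj]
  rw [← hflag]
  refine carries_crossRun (x' := pt (Y - 1) w₁) (adj_pt_row (by norm_num))
    (adj_pt_row (by norm_num)) (adj_pt_col hadjr) (adj_pt_row (by norm_num))
    (adj_pt_col hadjr) (adj_pt_col hadjw) ?_ ?_ ?_ ?_ ?_ ?_
  · grind [List.nodup_cons, pt_inj]
  · grind [swap, pt_inj]
  · have := hcolr s left_mem_uIcc; grind [swap, pt_inj]
  · have := hcolr r₁ (hr₁ _ left_mem_uIcc).1; grind [swap, pt_inj]
  · grind [swap, pt_inj]
  · grind [swap, pt_inj]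

theorem length_columnSlide (X a b : ℤ) : (columnSlide X a b).length = (b - a).natAbs := by
  rw [columnSlide]
  generalize (b - a).natAbs = n
  induction n with
  | zero => rfl
  | succ n ih => simp [slideRun, ih]

theorem length_jumpRun_le (Y s : ℤ) (flag : Bool) (r w : ℤ) :
    (jumpRun Y s flag r w).length ≤ 2 * (r - s).natAbs + 2 * (w - s).natAbs + 10 := by
  have hcross : ∀ x m y m' y' : Site 2, (crossRun x m y m' y' flag).length ≤ 6 := by
    intro x m y m' y'; cases flag <;> simp [crossRun, transferRun]
  have htowards : ∀ t, (t - towards s t).natAbs ≤ (t - s).natAbs + 1 := by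
    intro t; unfold towards; split_ifs <;> omega
  simp only [jumpRun, List.length_append, length_columnSlide]
  have := hcross (pt (Y - 1) s) (pt Y s) (pt (Y + 1) s) (pt Y (towards s r))
    (pt (Y + 1) (towards s r))
  have := htowards r
  have := htowards w
  omega

def jumpRuns (Y s lo hi : ℤ) : Finset (List (Site 2 × Site 2)) :=
  (Finset.univ ×ˢ Finset.Icc lo hi ×ˢ Finset.Icc lo hi).image fun c => jumpRun Y s c.1 c.2.1 c.2.2

theorem card_jumpRuns_le (Y s lo hi : ℤ) :
    (jumpRuns Y s lo hi).card ≤ 2 * (hi + 1 - lo).toNat ^ 2 :=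
  Finset.card_image_le.trans (by simp [Finset.card_product, sq])

theorem length_le_of_mem_jumpRuns {Y s lo hi : ℤ} {L : List (Site 2 × Site 2)}
    (hs : s ∈ Icc lo hi) (hL : L ∈ jumpRuns Y s lo hi) : L.length ≤ 4 * (hi - lo).toNat + 10 := by
  obtain ⟨⟨flag, r, w⟩, hc, rfl⟩ := Finset.mem_image.mp hL
  simp only [Finset.mem_product, Finset.mem_Icc] at hc ⊢
  have := length_jumpRun_le Y s flag r w
  rw [mem_Icc] at hs
  omega

theorem exists_nearest_ne {P : ℤ → Prop} {s r₀ : ℤ} (h : P r₀) (hr₀ : r₀ ≠ s) :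
    ∃ r, P r ∧ r ≠ s ∧ ∀ m ∈ uIcc s r, m ≠ s → m ≠ r → ¬P m := by
  have hex : ∃ n, ∃ r, P r ∧ r ≠ s ∧ (r - s).natAbs = n := ⟨_, r₀, h, hr₀, rfl⟩
  obtain ⟨r, hP, hrs, hn⟩ := Nat.find_spec hex
  refine ⟨r, hP, hrs, fun m hm hms hmr hPm => ?_⟩
  have := Nat.find_min' hex ⟨m, hPm, hms, rfl⟩
  rw [mem_uIcc] at hm
  omega

theorem exists_carries_jumpRun {η : Config 2} {Y s lo hi : ℤ} (hs : s ∈ Icc lo hi)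
    (hcol : ∀ m ∈ Icc lo hi, η (pt Y m) = false)
    (hleft : ∃ w ∈ Icc lo hi, w ≠ s ∧ η (pt (Y - 1) w) = false)
    (hright : ∃ r ∈ Icc lo hi, r ≠ s ∧ η (pt (Y + 1) r) = false)
    (hst : η (pt (Y - 1) s) = true) :
    ∃ L ∈ jumpRuns Y s lo hi, Carries 2 univ L η (pt (Y - 1) s) (pt (Y + 1) s) := by
  obtain ⟨w₀, hw₀, hw₀s, hW₀⟩ := hleft
  obtain ⟨r₀, hr₀, hr₀s, hR₀⟩ := hright
  obtain ⟨w, ⟨hw, hW⟩, hws, hwmin⟩ :=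
    exists_nearest_ne (P := fun w => w ∈ Icc lo hi ∧ η (pt (Y - 1) w) = false) ⟨hw₀, hW₀⟩ hw₀s
  obtain ⟨r, ⟨hr, hR⟩, hrs, hrmin⟩ :=
    exists_nearest_ne (P := fun r => r ∈ Icc lo hi ∧ η (pt (Y + 1) r) = false) ⟨hr₀, hR₀⟩ hr₀s
  refine ⟨_, Finset.mem_image.mpr ⟨(η (pt (Y + 1) s), r, w), by simp_all, rfl⟩,
    carries_jumpRun hrs hws (fun m hm => hcol m (uIcc_subset_Icc hs hr hm))
    (fun m hm => hcol m (uIcc_subset_Icc hs hw hm)) hR (fun m hm hms hmr => ?_) hW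
    (fun m hm hms hmw => ?_) hst⟩
  · simpa [uIcc_subset_Icc hs hr hm] using hrmin m hm hms hmr
  · simpa [uIcc_subset_Icc hs hw hm] using hwmin m hm hms hmw

theorem mem_col2_iff {x y : Site 2} {c : ℤ} {ℓ : ℕ} :
    x ∈ col2 y c ℓ ↔ ∃ m ∈ Icc (y 1 + 1) (y 1 + ℓ), x = pt (y 0 + c) m := by
  constructor
  · rintro ⟨h0, h1, h2⟩
    exact ⟨x 1, ⟨h1, h2⟩, funext fun i => by fin_cases i <;> simp [h0]⟩
  · rintro ⟨m, ⟨h1, h2⟩, rfl⟩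
    exact ⟨rfl, h1, h2⟩

theorem exists_carries_jumpRun_of_col2 {η : Config 2} {y : Site 2} {ℓ : ℕ} {s : ℤ}
    (hs : s ∈ Icc (y 1 + 1) (y 1 + ℓ))
    (hη : (∀ x ∈ col2 y 0 ℓ, η x = false) ∧
      (∃ x ∈ col2 y (-1) ℓ, x ≠ pt (y 0 - 1) s ∧ η x = false) ∧ TwoEmptyIn (col2 y 1 ℓ) η)
    (hst : η (pt (y 0 - 1) s) = true) :
    ∃ L ∈ jumpRuns (y 0) s (y 1 + 1) (y 1 + ℓ), Carries 2 univ L η (pt (y 0 - 1) s)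
      (pt (y 0 + 1) s) := by
  obtain ⟨hcol, ⟨x, hx, hxs, hxη⟩, a, ha, b, hb, hab, haη, hbη⟩ := hη
  obtain ⟨w, hw, rfl⟩ := mem_col2_iff.mp hx
  obtain ⟨ma, hma, rfl⟩ := mem_col2_iff.mp ha
  obtain ⟨mb, hmb, rfl⟩ := mem_col2_iff.mp hb
  rw [← sub_eq_add_neg] at hxs hxη
  refine exists_carries_jumpRun hs (fun m hm => hcol _ (mem_col2_iff.mpr ⟨m, hm, by simp⟩))
    ⟨w, hw, fun h => hxs (h ▸ rfl), hxη⟩ ?_ hst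
  by_cases hmas : ma = s
  · exact ⟨mb, hmb, fun h => hab (by rw [hmas, h]), hbη⟩
  · exact ⟨ma, hma, hmas, haη⟩

theorem pt_add_two_smul_eVec (a b : ℤ) : pt a b + (2 : ℤ) • eVec 2 0 = pt (a + 2) b := by
  funext i; fin_cases i <;> simp [eVec]

theorem two_rpow_mul_logb {x : ℝ} (hx : 0 < x) (n : ℕ) : (2 : ℝ) ^ (n * Real.logb 2 x) = x ^ n := by
  rw [mul_comm, Real.rpow_mul zero_le_two, Real.rpow_logb zero_lt_two (by norm_num) hx,
    Real.rpow_natCast]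

end Plane

/-- (Jump move, `k = d = 2`.) A particle at `⋆` may hop over
an empty column, with `T ≤ C ℓ` and `Loss ≤ C log₂ ℓ`. -/
theorem statement11 :
    ∃ C : ℝ, 0 < C ∧
      ∀ ℓ : ℕ, 2 ≤ ℓ → ∀ y star : Site 2, star ∈ col2 y (-1) ℓ →
        ∃ T : ℕ,
          ∃ mv : TStepMove 2 2
            {η | (∀ x ∈ col2 y 0 ℓ, η x = false) ∧
              (∃ x ∈ col2 y (-1) ℓ, x ≠ star ∧ η x = false) ∧
              TwoEmptyIn (col2 y 1 ℓ) η}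
            Set.univ T,
            (T : ℝ) ≤ C * ℓ ∧
            LossBoundedBy mv (C * Real.logb 2 ℓ) ∧
            ∀ η : Config 2,
              ((∀ x ∈ col2 y 0 ℓ, η x = false) ∧
                (∃ x ∈ col2 y (-1) ℓ, x ≠ star ∧ η x = false) ∧
                TwoEmptyIn (col2 y 1 ℓ) η) →
              η star = true →
                mv.conf η T = swap η star (star + (2 : ℤ) • eVec 2 0) ∧
                mv.pos η star T = star + (2 : ℤ) • eVec 2 0 := by
  refine ⟨7, by norm_num, fun ℓ hℓ y star hstar => ?_⟩
  obtain ⟨s, hs, rfl⟩ := mem_col2_iff.mp hstar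
  rw [← sub_eq_add_neg, pt_add_two_smul_eVec, show y 0 - 1 + 2 = y 0 + 1 by ring]
  set S := jumpRuns (y 0) s (y 1 + 1) (y 1 + ℓ)
  have hlen : ∀ L ∈ S, L.length ≤ 7 * ℓ := fun L hL => by
    have := length_le_of_mem_jumpRuns hs hL
    omega
  have hcard : (S.card + 1 : ℝ) ≤ 2 ^ (7 * Real.logb 2 ℓ) := by
    have hS : (S.card : ℝ) ≤ 2 * ℓ ^ 2 := by
      have := card_jumpRuns_le (y 0) s (y 1 + 1) (y 1 + ℓ)
      rw [show (y 1 + ℓ + 1 - (y 1 + 1)).toNat = ℓ by omega] at this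
      exact_mod_cast this
    have hℓ' : (2 : ℝ) ≤ ℓ := by exact_mod_cast hℓ
    have h5 : (2 : ℝ) ^ 5 ≤ ℓ ^ 5 := pow_le_pow_left₀ zero_le_two hℓ' 5
    rw [show (7 : ℝ) = (7 : ℕ) by norm_num, two_rpow_mul_logb (by positivity)]
    nlinarith
  obtain ⟨mv, hloss, hmv⟩ := exists_tStepMove_of_carries (k := 2) (V := Set.univ) S hlen hcard
    (pt (y 0 - 1) s) (pt (y 0 + 1) s)
  exact ⟨7 * ℓ, mv, by push_cast; rfl, hloss,
    fun η hη hst => hmv η (exists_carries_jumpRun_of_col2 hs hη hst)⟩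

end KA
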